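/- arXiv:1608.07544 — 2 statements merged into one kernel-verified Lean document; each statement's English description precedes it below -/
import Mathlib

section
/- Under the assumptions of the two previous results combined: let x⋆ be optimal for minimize f₀(x) s.t. fᵢ(x) ≤ 0 (i ∈ [p]) with optimal multipliers λ⋆, and let x̂⋆ minimize the slack-relaxed barrier Φ(x) = f₀(x) - (1/c) Σᵢ log(s - fᵢ(x)) with c > 0, s ≥ 0. Then |f₀(x̂⋆) - f₀(x⋆)| ≤ p/c + s · Σᵢ λᵢ⋆. -/
/-!
The lower bound is weak duality: `f₀ x⋆ ≤ f₀ x̂⋆ + ∑ λᵢ⋆ fᵢ(x̂⋆) ≤ f₀ x̂⋆ + s ∑ λᵢ⋆`, since `fᵢ(x̂⋆) < s`.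
For the upper bound, move from `x̂⋆` towards `x⋆` along `y = (1 - t) x̂⋆ + t x⋆`. By convexity every
slack `s - fᵢ` shrinks at most by the factor `1 - t`, so the barrier term grows at most by
`-(p/c) log(1 - t)`, while `f₀` drops by at least `t (f₀ x̂⋆ - f₀ x⋆)`. Minimality of `x̂⋆` gives
`t (f₀ x̂⋆ - f₀ x⋆) ≤ -(p/c) log(1 - t) ≤ (p/c) t / (1 - t)`, and `t → 0⁺` yields the bound `p/c`.
-/

open Filter Topology Set

noncomputable def slackBarrier {E ι : Type*} [Fintype ι] (f₀ : E → ℝ) (f : ι → E → ℝ) (c s : ℝ)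
    (x : E) : ℝ :=
  f₀ x - (1 / c) * ∑ i, Real.log (s - f i x)

lemma sub_le_mul_sum_of_le_lagrangian {E ι : Type*} [Fintype ι] {f₀ : E → ℝ} {f : ι → E → ℝ}
    {lam : ι → ℝ} (hlam : ∀ i, 0 ≤ lam i) {x xs : E} {s : ℝ} (hx : ∀ i, f i x ≤ s)
    (hdual : f₀ xs ≤ f₀ x + ∑ i, lam i * f i x) :
    f₀ xs - f₀ x ≤ s * ∑ i, lam i := by
  have hsum : ∑ i, lam i * f i x ≤ ∑ i, lam i * s :=
    Finset.sum_le_sum fun i _ => mul_le_mul_of_nonneg_left (hx i) (hlam i)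
  rw [Finset.mul_sum]
  simp only [mul_comm s] at hsum ⊢
  linarith

lemma ConvexOn.one_sub_mul_slack_le {E : Type*} [AddCommGroup E] [Module ℝ E] {g : E → ℝ}
    (hg : ConvexOn ℝ univ g) {x y : E} {s t : ℝ} (hy : g y ≤ s) (ht₀ : 0 ≤ t) (ht₁ : t ≤ 1) :
    (1 - t) * (s - g x) ≤ s - g ((1 - t) • x + t • y) := by
  have hconv := hg.2 (mem_univ x) (mem_univ y) (sub_nonneg.2 ht₁) ht₀ (by ring)
  simp only [smul_eq_mul] at hconv
  nlinarith

lemma neg_log_one_sub_le {t : ℝ} (ht : t < 1) : -Real.log (1 - t) ≤ t / (1 - t) := by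
  have hpos : 0 < 1 - t := sub_pos.2 ht
  have h := Real.one_sub_inv_le_log_of_pos hpos
  have heq : (1 - t)⁻¹ - 1 = t / (1 - t) := by field_simp; ring
  linarith

lemma le_of_forall_one_sub_mul_le {a b : ℝ} (h : ∀ t ∈ Ioo (0 : ℝ) 1, (1 - t) * a ≤ b) :
    a ≤ b := by
  have hlim : Tendsto (fun t : ℝ => (1 - t) * a) (𝓝[>] 0) (𝓝 a) := by
    have hcont : Continuous fun t : ℝ => (1 - t) * a := by fun_prop
    simpa using (hcont.tendsto 0).mono_left nhdsWithin_le_nhds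
  exact le_of_tendsto hlim (eventually_mem_set.2 (Ioo_mem_nhdsGT one_pos) |>.mono h)

section Barrier

variable {E ι : Type*} [AddCommGroup E] [Module ℝ E] [Fintype ι]
  {f₀ : E → ℝ} {f : ι → E → ℝ} {c s : ℝ} {x xhat : E}

lemma mul_sub_le_neg_log_of_isMinOn_slackBarrier (hf₀ : ConvexOn ℝ univ f₀)
    (hf : ∀ i, ConvexOn ℝ univ (f i)) (hc : 0 < c) (hx : ∀ i, f i x ≤ s)
    (hxhat_dom : ∀ i, f i xhat < s)
    (hxhat_opt : IsMinOn (slackBarrier f₀ f c s) {y | ∀ i, f i y < s} xhat)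
    {t : ℝ} (ht : t ∈ Ioo (0 : ℝ) 1) :
    t * (f₀ xhat - f₀ x) ≤ -(Fintype.card ι / c) * Real.log (1 - t) := by
  obtain ⟨ht₀, ht₁⟩ := ht
  set y := (1 - t) • xhat + t • x
  have hone_sub : 0 < 1 - t := sub_pos.2 ht₁
  have hslack_pos : ∀ i, 0 < s - f i xhat := fun i => sub_pos.2 (hxhat_dom i)
  have hslack : ∀ i, (1 - t) * (s - f i xhat) ≤ s - f i y := fun i =>
    (hf i).one_sub_mul_slack_le (hx i) ht₀.le ht₁.le
  have hy_dom : ∀ i, f i y < s := fun i =>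
    sub_pos.1 ((mul_pos hone_sub (hslack_pos i)).trans_le (hslack i))
  have hlog : Fintype.card ι * Real.log (1 - t) + ∑ i, Real.log (s - f i xhat) ≤
      ∑ i, Real.log (s - f i y) := by
    have h := Finset.sum_le_sum fun i (_ : i ∈ Finset.univ) =>
      (Real.log_mul hone_sub.ne' (hslack_pos i).ne').symm.trans_le
        (Real.log_le_log (mul_pos hone_sub (hslack_pos i)) (hslack i))
    simpa [Finset.sum_add_distrib, nsmul_eq_mul] using h
  have hf₀y : f₀ y ≤ (1 - t) * f₀ xhat + t * f₀ x := by
    simpa using hf₀.2 (mem_univ xhat) (mem_univ x) hone_sub.le ht₀.le (by ring)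
  have hopt := isMinOn_iff.1 hxhat_opt y hy_dom
  unfold slackBarrier at hopt
  have hlog_div := div_le_div_of_nonneg_right hlog hc.le
  rw [add_div, mul_div_right_comm] at hlog_div
  simp only [one_div_mul_eq_div] at hopt
  linarith

lemma sub_le_card_div_of_isMinOn_slackBarrier (hf₀ : ConvexOn ℝ univ f₀)
    (hf : ∀ i, ConvexOn ℝ univ (f i)) (hc : 0 < c) (hx : ∀ i, f i x ≤ s)
    (hxhat_dom : ∀ i, f i xhat < s)
    (hxhat_opt : IsMinOn (slackBarrier f₀ f c s) {y | ∀ i, f i y < s} xhat) :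
    f₀ xhat - f₀ x ≤ Fintype.card ι / c := by
  refine le_of_forall_one_sub_mul_le fun t ht => ?_
  have hgap := mul_sub_le_neg_log_of_isMinOn_slackBarrier hf₀ hf hc hx hxhat_dom hxhat_opt ht
  have hlog := mul_le_mul_of_nonneg_left (neg_log_one_sub_le ht.2)
    (div_nonneg (Nat.cast_nonneg (Fintype.card ι)) hc.le)
  have hone_sub : 0 < 1 - t := sub_pos.2 ht.2
  rw [mul_div_assoc', le_div_iff₀ hone_sub] at hlog
  nlinarith [ht.1]

end Barrier

theorem stmt_7_general {n p : ℕ} (f₀ : EuclideanSpace ℝ (Fin n) → ℝ)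
    (f : Fin p → EuclideanSpace ℝ (Fin n) → ℝ)
    (hf₀ : ConvexOn ℝ Set.univ f₀)
    (hf : ∀ i, ConvexOn ℝ Set.univ (f i))
    (xs : EuclideanSpace ℝ (Fin n)) (hxs_feas : ∀ i, f i xs ≤ 0)
    (lam : Fin p → ℝ) (hlam : ∀ i, 0 ≤ lam i)
    (hdual : ∀ x, f₀ xs ≤ f₀ x + ∑ i, lam i * f i x)
    (c s : ℝ) (hc : 0 < c) (hs : 0 ≤ s)
    (xhat : EuclideanSpace ℝ (Fin n)) (hxhat_dom : ∀ i, f i xhat < s)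
    (hxhat_opt : ∀ x, (∀ i, f i x < s) →
      f₀ xhat - (1 / c) * ∑ i, Real.log (s - f i xhat) ≤
        f₀ x - (1 / c) * ∑ i, Real.log (s - f i x)) :
    |f₀ xhat - f₀ xs| ≤ (p : ℝ) / c + s * ∑ i, lam i := by
  have hlower := sub_le_mul_sum_of_le_lagrangian hlam (fun i => (hxhat_dom i).le) (hdual xhat)
  have hupper := sub_le_card_div_of_isMinOn_slackBarrier hf₀ hf hc
    (fun i => (hxs_feas i).trans hs) hxhat_dom (isMinOn_iff.2 hxhat_opt)
  rw [Fintype.card_fin] at hupper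
  have hdual_term : 0 ≤ s * ∑ i, lam i := mul_nonneg hs (Finset.sum_nonneg fun i _ => hlam i)
  have hbarrier_term : 0 ≤ (p : ℝ) / c := div_nonneg (Nat.cast_nonneg p) hc.le
  rw [abs_le]
  constructor <;> linarith

/-- combined slack + barrier suboptimality bound. -/
theorem stmt_7 {n p : ℕ} (f₀ : EuclideanSpace ℝ (Fin n) → ℝ)
    (f : Fin p → EuclideanSpace ℝ (Fin n) → ℝ)
    (hf₀ : ConvexOn ℝ Set.univ f₀) (hf₀d : Differentiable ℝ f₀)
    (hf : ∀ i, ConvexOn ℝ Set.univ (f i)) (hfd : ∀ i, Differentiable ℝ (f i))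
    (xs : EuclideanSpace ℝ (Fin n)) (hxs_feas : ∀ i, f i xs ≤ 0)
    (hxs_opt : ∀ x, (∀ i, f i x ≤ 0) → f₀ xs ≤ f₀ x)
    (lam : Fin p → ℝ) (hlam : ∀ i, 0 ≤ lam i)
    (hdual : ∀ x, f₀ xs ≤ f₀ x + ∑ i, lam i * f i x)
    (c s : ℝ) (hc : 0 < c) (hs : 0 ≤ s)
    (xhat : EuclideanSpace ℝ (Fin n)) (hxhat_dom : ∀ i, f i xhat < s)
    (hxhat_opt : ∀ x, (∀ i, f i x < s) →
      f₀ xhat - (1 / c) * ∑ i, Real.log (s - f i xhat) ≤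
        f₀ x - (1 / c) * ∑ i, Real.log (s - f i x)) :
    |f₀ xhat - f₀ xs| ≤ (p : ℝ) / c + s * ∑ i, lam i :=
  stmt_7_general f₀ f hf₀ hf xs hxs_feas lam hlam hdual c s hc hs xhat hxhat_dom hxhat_opt
end

section
/- Let ψ : ℝ≥0 → ℝ be continuously differentiable with ψ(0) > 0, and suppose there exist ε > 0 and α > 0 such that ψ'(t) ≥ α·ψ(t) whenever 0 < ψ(t) < ε. Then ψ(t) > 0 for all t ≥ 0. -/
/-!
The level `m = min (ψ 0) ε / 2` lies in `(0, ε)`, so wherever `ψ` equals `m` its derivative is at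
least `α m > 0`: `ψ` can only cross `m` upwards. Since `ψ 0 ≥ m`, the fencing theorem gives
`ψ ≥ m > 0` on `[0, ∞)`.
-/

theorem le_image_of_deriv_pos_of_eq {f : ℝ → ℝ} (hf : Differentiable ℝ f) {a m : ℝ}
    (ha : m ≤ f a) (hm : ∀ x, a ≤ x → f x = m → 0 < deriv f x) :
    ∀ x, a ≤ x → m ≤ f x := by
  intro x hx
  have hneg : ∀ y, HasDerivAt (fun y => -f y) (-deriv f y) y :=
    fun y => (hf y).hasDerivAt.neg
  have key := image_le_of_deriv_right_lt_deriv_boundary (a := a) (b := x) (B := fun _ => -m)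
    (B' := fun _ => 0) (fun y _ => (hneg y).continuousAt.continuousWithinAt)
    (fun y _ => (hneg y).hasDerivWithinAt) (neg_le_neg ha) (fun _ => hasDerivAt_const _ _)
    (fun y hy hfy => neg_neg_of_pos (hm y hy.1 (neg_inj.mp hfy)))
    ⟨hx, le_rfl⟩
  exact neg_le_neg_iff.mp key

/-- the boundary ψ = 0 is repelling, so the residual ψ stays
positive. -/
theorem stmt_12 (ψ : ℝ → ℝ) (hψ : ContDiff ℝ 1 ψ) (h0 : 0 < ψ 0)
    (ε α : ℝ) (hε : 0 < ε) (hα : 0 < α)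
    (hrep : ∀ t : ℝ, 0 ≤ t → 0 < ψ t → ψ t < ε → α * ψ t ≤ deriv ψ t) :
    ∀ t : ℝ, 0 ≤ t → 0 < ψ t := by
  obtain ⟨m, hm_pos, hm_lt, hm_le⟩ : ∃ m, 0 < m ∧ m < ε ∧ m ≤ ψ 0 :=
    ⟨min (ψ 0) ε / 2, by positivity, by linarith [min_le_right (ψ 0) ε],
      by linarith [min_le_left (ψ 0) ε]⟩
  have hbarrier := le_image_of_deriv_pos_of_eq (hψ.differentiable one_ne_zero) hm_le
    fun x hx hψx => by
      have := hrep x hx (hψx ▸ hm_pos) (hψx ▸ hm_lt)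
      rw [hψx] at this
      exact (mul_pos hα hm_pos).trans_le this
  exact fun t ht => hm_pos.trans_le (hbarrier t ht)
end
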